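/- If f,g : [0,∞) → [0,∞) are s-convex in the second sense for s ∈ (0,1], then (1/(b-a))∫_a^b f(x)g(x) dx ≤ M(a,b)/(2s+1) + N(a,b)·Γ(s+1)²/Γ(2s+2), where M(a,b)=f(a)g(a)+f(b)g(b) and N(a,b)=f(a)g(b)+f(b)g(a). -/

import Mathlib

/- Substituting x = t a + (1 - t) b turns the mean of f g over [a, b] into an integral over
[0, 1]. There s-convexity bounds f g pointwise by the product of two combinations of t ^ s and
(1 - t) ^ s, whose integral is (f a g a + f b g b) / (2 s + 1) from the squares and
(f a g b + f b g a) B(s + 1, s + 1) from the cross terms. -/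

open MeasureTheory Real

open Set ProbabilityTheory

def SConvexOn (s : ℝ) (S : Set ℝ) (f : ℝ → ℝ) : Prop :=
  ∀ x ∈ S, ∀ y ∈ S, ∀ t ∈ Icc (0 : ℝ) 1, f (t * x + (1 - t) * y) ≤ t ^ s * f x + (1 - t) ^ s * f y

theorem SConvexOn.mul_le_mul {s : ℝ} {S : Set ℝ} {f g : ℝ → ℝ} (hf : SConvexOn s S f)
    (hg : SConvexOn s S g) (hS : Convex ℝ S) (hf₀ : ∀ x ∈ S, 0 ≤ f x) (hg₀ : ∀ x ∈ S, 0 ≤ g x)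
    {x y t : ℝ} (hx : x ∈ S) (hy : y ∈ S) (ht : t ∈ Icc (0 : ℝ) 1) :
    f (t * x + (1 - t) * y) * g (t * x + (1 - t) * y) ≤
      (t ^ s * f x + (1 - t) ^ s * f y) * (t ^ s * g x + (1 - t) ^ s * g y) := by
  have hmem : t * x + (1 - t) * y ∈ S :=
    hS hx hy ht.1 (sub_nonneg.2 ht.2) (add_sub_cancel t 1)
  have hfxy := hf x hx y hy t ht
  exact _root_.mul_le_mul hfxy (hg x hx y hy t ht) (hg₀ _ hmem) ((hf₀ _ hmem).trans hfxy)

theorem intervalIntegral_rpow_mul_one_sub_rpow {α β : ℝ} (hα : 0 < α) (hβ : 0 < β) :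
    ∫ t in (0 : ℝ)..1, t ^ (α - 1) * (1 - t) ^ (β - 1) = beta α β := by
  have hcomplex : ((∫ t in (0 : ℝ)..1, t ^ (α - 1) * (1 - t) ^ (β - 1) : ℝ) : ℂ) =
      Complex.betaIntegral α β := by
    rw [Complex.betaIntegral, ← intervalIntegral.integral_ofReal]
    refine intervalIntegral.integral_congr fun t ht => ?_
    rw [uIcc_of_le zero_le_one] at ht
    push_cast
    rw [Complex.ofReal_cpow ht.1, Complex.ofReal_cpow (sub_nonneg.2 ht.2)]
    push_cast
    rfl
  rw [beta_eq_betaIntegralReal α β hα hβ, ← hcomplex, Complex.ofReal_re]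

theorem intervalIntegral_rpow_mul_rpow_self {s : ℝ} (hs : 0 ≤ s) :
    ∫ t in (0 : ℝ)..1, t ^ s * t ^ s = 1 / (2 * s + 1) := by
  have hsq : ∀ t ∈ uIcc (0 : ℝ) 1, t ^ s * t ^ s = t ^ (2 * s) := fun t ht => by
    rw [uIcc_of_le zero_le_one] at ht
    rw [← rpow_add_of_nonneg ht.1 hs hs, two_mul]
  rw [intervalIntegral.integral_congr hsq, integral_rpow (Or.inl (by linarith)),
    one_rpow, zero_rpow (by linarith)]
  ring

theorem intervalIntegral_rpow_combination_mul {s : ℝ} (hs : 0 ≤ s) (p q r u : ℝ) :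
    ∫ t in (0 : ℝ)..1, (t ^ s * p + (1 - t) ^ s * q) * (t ^ s * r + (1 - t) ^ s * u) =
      (p * r + q * u) / (2 * s + 1) + (p * u + q * r) * beta (s + 1) (s + 1) := by
  have hsq' : ∫ t in (0 : ℝ)..1, (1 - t) ^ s * (1 - t) ^ s = 1 / (2 * s + 1) := by
    rw [intervalIntegral.integral_comp_sub_left (fun t : ℝ => t ^ s * t ^ s), sub_self, sub_zero,
      intervalIntegral_rpow_mul_rpow_self hs]
  have hcross : ∫ t in (0 : ℝ)..1, t ^ s * (1 - t) ^ s = beta (s + 1) (s + 1) := by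
    simpa using intervalIntegral_rpow_mul_one_sub_rpow (α := s + 1) (β := s + 1)
      (by linarith) (by linarith)
  have hcont : Continuous fun t : ℝ => t ^ s := continuous_rpow_const hs
  have hexpand : ∀ t ∈ uIcc (0 : ℝ) 1,
      (t ^ s * p + (1 - t) ^ s * q) * (t ^ s * r + (1 - t) ^ s * u) =
        t ^ s * t ^ s * (p * r) + t ^ s * (1 - t) ^ s * (p * u + q * r) +
          (1 - t) ^ s * (1 - t) ^ s * (q * u) := fun t _ => by ring
  rw [intervalIntegral.integral_congr hexpand, intervalIntegral.integral_add,
    intervalIntegral.integral_add, intervalIntegral.integral_mul_const,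
    intervalIntegral.integral_mul_const, intervalIntegral.integral_mul_const,
    intervalIntegral_rpow_mul_rpow_self hs, hsq', hcross]
  · ring
  all_goals
    apply Continuous.intervalIntegrable
    fun_prop

theorem intervalIntegral_comp_convexCombination (F : ℝ → ℝ) {a b : ℝ} (hab : a ≠ b) :
    ∫ t in (0 : ℝ)..1, F (t * a + (1 - t) * b) = (b - a)⁻¹ * ∫ x in a..b, F x := by
  have hc : a - b ≠ 0 := sub_ne_zero.2 hab
  calc ∫ t in (0 : ℝ)..1, F (t * a + (1 - t) * b) = ∫ t in (0 : ℝ)..1, F ((a - b) * t + b) := by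
        congr 1; ext t; ring_nf
    _ = (a - b)⁻¹ * ∫ x in b..a, F x := by
        rw [intervalIntegral.integral_comp_mul_add F hc b]; simp
    _ = (b - a)⁻¹ * ∫ x in a..b, F x := by
        rw [intervalIntegral.integral_symm a b, ← neg_sub b a, inv_neg, neg_mul_neg]

theorem intervalIntegral_mono_on_of_nonneg {f g : ℝ → ℝ} {a b : ℝ} (hab : a ≤ b)
    (hg : IntervalIntegrable g volume a b) (hf₀ : ∀ x ∈ Icc a b, 0 ≤ f x)
    (hfg : ∀ x ∈ Icc a b, f x ≤ g x) :
    ∫ x in a..b, f x ≤ ∫ x in a..b, g x := by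
  rw [intervalIntegral.integral_of_le hab, intervalIntegral.integral_of_le hab]
  exact integral_mono_of_nonneg
    (ae_restrict_of_forall_mem measurableSet_Ioc fun x hx => hf₀ x (Ioc_subset_Icc_self hx)) hg.1
    (ae_restrict_of_forall_mem measurableSet_Ioc fun x hx => hfg x (Ioc_subset_Icc_self hx))

theorem s_convex_product_general (s : ℝ) (f g : ℝ → ℝ) (a b : ℝ)
    (hs : s ∈ Set.Ioc (0:ℝ) 1)
    (hf : ∀ x ∈ Set.Ici (0:ℝ), 0 ≤ f x)
    (hg : ∀ x ∈ Set.Ici (0:ℝ), 0 ≤ g x)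
    (hconvf : ∀ x ∈ Set.Ici (0:ℝ), ∀ y ∈ Set.Ici (0:ℝ), ∀ t ∈ Set.Icc (0:ℝ) 1,
      f (t * x + (1 - t) * y) ≤ t ^ s * f x + (1 - t) ^ s * f y)
    (hconvg : ∀ x ∈ Set.Ici (0:ℝ), ∀ y ∈ Set.Ici (0:ℝ), ∀ t ∈ Set.Icc (0:ℝ) 1,
      g (t * x + (1 - t) * y) ≤ t ^ s * g x + (1 - t) ^ s * g y)
    (ha : 0 ≤ a) (hab : a < b) :
    (1 / (b - a)) * ∫ x in a..b, f x * g x ≤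
      (f a * g a + f b * g b) / (2 * s + 1) +
      (f a * g b + f b * g a) * (Real.Gamma (s + 1)) ^ 2 / Real.Gamma (2 * s + 2) := by
  have hs₀ : 0 ≤ s := hs.1.le
  have hb : b ∈ Ici (0 : ℝ) := ha.trans hab.le
  have hmem : ∀ t ∈ Icc (0 : ℝ) 1, t * a + (1 - t) * b ∈ Ici (0 : ℝ) := fun t ht =>
    convex_Ici 0 ha hb ht.1 (sub_nonneg.2 ht.2) (add_sub_cancel t 1)
  have hcont : Continuous fun t : ℝ => t ^ s := continuous_rpow_const hs₀
  calc (1 / (b - a)) * ∫ x in a..b, f x * g x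
      = ∫ t in (0 : ℝ)..1, f (t * a + (1 - t) * b) * g (t * a + (1 - t) * b) := by
        rw [one_div, intervalIntegral_comp_convexCombination (fun x => f x * g x) hab.ne]
    _ ≤ ∫ t in (0 : ℝ)..1,
          (t ^ s * f a + (1 - t) ^ s * f b) * (t ^ s * g a + (1 - t) ^ s * g b) :=
        intervalIntegral_mono_on_of_nonneg zero_le_one
          (Continuous.intervalIntegrable (by fun_prop) 0 1)
          (fun t ht => mul_nonneg (hf _ (hmem t ht)) (hg _ (hmem t ht)))
          (fun t ht => SConvexOn.mul_le_mul hconvf hconvg (convex_Ici 0) hf hg ha hb ht)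
    _ = _ := by
        rw [intervalIntegral_rpow_combination_mul hs₀, beta, ← sq,
          show s + 1 + (s + 1) = 2 * s + 2 by ring]
        ring

theorem s_convex_product (s : ℝ) (f g : ℝ → ℝ) (a b : ℝ)
    (hs : s ∈ Set.Ioc (0:ℝ) 1)
    (hf : ∀ x ∈ Set.Ici (0:ℝ), 0 ≤ f x)
    (hg : ∀ x ∈ Set.Ici (0:ℝ), 0 ≤ g x)
    (hconvf : ∀ x ∈ Set.Ici (0:ℝ), ∀ y ∈ Set.Ici (0:ℝ), ∀ t ∈ Set.Icc (0:ℝ) 1,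
      f (t * x + (1 - t) * y) ≤ t ^ s * f x + (1 - t) ^ s * f y)
    (hconvg : ∀ x ∈ Set.Ici (0:ℝ), ∀ y ∈ Set.Ici (0:ℝ), ∀ t ∈ Set.Icc (0:ℝ) 1,
      g (t * x + (1 - t) * y) ≤ t ^ s * g x + (1 - t) ^ s * g y)
    (ha : 0 ≤ a) (hab : a < b)
    (hfgint : IntegrableOn (fun x => f x * g x) (Set.Icc a b)) :
    (1 / (b - a)) * ∫ x in a..b, f x * g x ≤
      (f a * g a + f b * g b) / (2 * s + 1) +
      (f a * g b + f b * g a) * (Real.Gamma (s + 1)) ^ 2 / Real.Gamma (2 * s + 2) :=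
  s_convex_product_general s f g a b hs hf hg hconvf hconvg ha hab
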